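/- In the c-class GAMO setting, for each class i, ∫ [α_i·log(α_i/(α_i+β_i)) + β_i·log(β_i/(α_i+β_i))] dμ ≥ P_c·log(1/c) + (c−1)·P_c·log((c−1)/c) (with the convention 0·log 0 = 0, assuming the integrand is μ-integrable), with equality if and only if α_i(x)/P_c = β_i(x)/((c−1)·P_c) for μ-almost every x. -/

import Mathlib

open MeasureTheory

lemma aux_xlog (x y : ℝ) (hx : 0 ≤ x) (hy : 0 < y) :
    x - y ≤ x * Real.log (x / y) ∧ (x * Real.log (x / y) = x - y ↔ x = y) := by
  rcases eq_or_lt_of_le hx with h | hx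
  · subst h
    simp only [zero_mul, zero_sub, zero_div, Real.log_zero]
    constructor
    · linarith
    · constructor
      · intro h; linarith
      · intro h; exact absurd h.symm hy.ne'
  · have hyx : 0 < y / x := div_pos hy hx
    have h1 : Real.log (y / x) ≤ y / x - 1 := Real.log_le_sub_one_of_pos hyx
    have hlog : Real.log (x / y) = - Real.log (y / x) := by
      rw [← Real.log_inv, inv_div]
    constructor
    · rw [hlog]
      have := mul_le_mul_of_nonneg_left h1 hx.le
      have hxy : x * (y / x) = y := by field_simp
      nlinarith
    · constructor
      · intro h
        by_contra hne
        have hne' : y / x ≠ 1 := by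
          intro h1'
          apply hne
          field_simp at h1'
          linarith
        have h2 : Real.log (y / x) < y / x - 1 :=
          Real.log_lt_sub_one_of_pos hyx hne'
        have := mul_lt_mul_of_pos_left h2 hx
        have hxy : x * (y / x) = y := by field_simp
        rw [hlog] at h
        nlinarith
      · intro h
        subst h
        rw [div_self hy.ne', Real.log_one]
        ring

lemma ptwise (C a b : ℝ) (hC : 2 ≤ C) (ha : 0 ≤ a) (hb : 0 ≤ b) :
    a * Real.log (1 / C) + b * Real.log ((C - 1) / C) ≤
      a * Real.log (a / (a + b)) + b * Real.log (b / (a + b)) ∧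
    (a * Real.log (a / (a + b)) + b * Real.log (b / (a + b)) =
       a * Real.log (1 / C) + b * Real.log ((C - 1) / C) ↔ b = (C - 1) * a) := by
  have hC0 : 0 < C := by linarith
  have hC1 : 0 < C - 1 := by linarith
  rcases eq_or_lt_of_le (add_nonneg ha hb) with hs | hs
  · have ha0 : a = 0 := by linarith
    have hb0 : b = 0 := by linarith
    subst ha0; subst hb0
    simp
  · set y1 : ℝ := (a + b) / C with hy1def
    set y2 : ℝ := (C - 1) * (a + b) / C with hy2def
    have hy1 : 0 < y1 := div_pos hs hC0
    have hy2 : 0 < y2 := div_pos (mul_pos hC1 hs) hC0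
    have hsum : y1 + y2 = a + b := by rw [hy1def, hy2def, ← add_div, div_eq_iff hC0.ne']; ring
    -- identities
    have id1 : a * Real.log (a / y1) = a * Real.log (a / (a + b)) - a * Real.log (1 / C) := by
      rcases eq_or_lt_of_le ha with h | h
      · rw [← h]; simp
      · have : a / y1 = (a / (a + b)) / (1 / C) := by
          rw [hy1def]; field_simp
        rw [this, Real.log_div (by positivity) (by positivity)]
        ring
    have id2 : b * Real.log (b / y2) = b * Real.log (b / (a + b)) - b * Real.log ((C - 1) / C) := by
      rcases eq_or_lt_of_le hb with h | h
      · rw [← h]; simp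
      · have : b / y2 = (b / (a + b)) / ((C - 1) / C) := by
          rw [hy2def]; field_simp
        rw [this, Real.log_div (by positivity) (by positivity)]
        ring
    obtain ⟨h1le, h1eq⟩ := aux_xlog a y1 ha hy1
    obtain ⟨h2le, h2eq⟩ := aux_xlog b y2 hb hy2
    constructor
    · linarith
    · constructor
      · intro h
        have hq1 : a * Real.log (a / y1) = a - y1 := by linarith
        have hay1 : a = y1 := h1eq.1 hq1
        rw [hy1def] at hay1
        field_simp at hay1
        linarith
      · intro h
        have hay1 : a = y1 := by rw [hy1def, h]; field_simp; ring
        have hby2 : b = y2 := by rw [hy2def, h]; field_simp; ring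
        have e1 := h1eq.2 hay1
        have e2 := h2eq.2 hby2
        linarith

/-- In the `c`-class GAMO setting (σ-finite `(X, μ)`; positive, nondecreasing priors `P`
summing to `1`; real densities `pd i` and generated densities `pg i` integrating to `1`;
`α i = P i · pd i + (P c - P i) · pg i`, `β i = ∑_{j ≠ i} α j`, so `∫ α i dμ = P c` and
`∫ β i dμ = (c-1)·P c`), for each class `i`,
`∫ (α i · log (α i/(α i+β i)) + β i · log (β i/(α i+β i))) dμ ≥
  P c · log (1/c) + (c-1)·P c · log ((c-1)/c)`
(with `0·log 0 = 0`, assuming the integrand is μ-integrable), with equality iff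
`α i x / P c = β i x / ((c-1)·P c)` for μ-a.e. `x`. -/
theorem gamo_classwise_lower_bound (X : Type*) [MeasurableSpace X]
    (μ : Measure X) [SigmaFinite μ]
    (c : ℕ) (hc : 2 ≤ c)
    (P : Fin c → ℝ) (hP_pos : ∀ i, 0 < P i)
    (hP_mono : ∀ i j : Fin c, i ≤ j → P i ≤ P j)
    (hP_sum : ∑ i, P i = 1)
    (pd pg : Fin c → X → ℝ)
    (hpd_meas : ∀ i, Measurable (pd i)) (hpg_meas : ∀ i, Measurable (pg i))
    (hpd_nonneg : ∀ i x, 0 ≤ pd i x) (hpg_nonneg : ∀ i x, 0 ≤ pg i x)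
    (hpd_int : ∀ i, ∫ x, pd i x ∂μ = 1) (hpg_int : ∀ i, ∫ x, pg i x ∂μ = 1)
    (Pc : ℝ) (hPc : Pc = P ⟨c - 1, by omega⟩)
    (α β : Fin c → X → ℝ)
    (hα : ∀ i x, α i x = P i * pd i x + (Pc - P i) * pg i x)
    (hβ : ∀ i x, β i x = ∑ j ∈ Finset.univ.erase i, α j x)
    (hint : ∀ i, Integrable (fun x =>
      α i x * Real.log (α i x / (α i x + β i x)) +
        β i x * Real.log (β i x / (α i x + β i x))) μ) :
    ∀ i : Fin c,
      (Pc * Real.log (1 / (c : ℝ)) + ((c : ℝ) - 1) * Pc * Real.log (((c : ℝ) - 1) / (c : ℝ)) ≤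
        ∫ x, (α i x * Real.log (α i x / (α i x + β i x)) +
          β i x * Real.log (β i x / (α i x + β i x))) ∂μ) ∧
      ((∫ x, (α i x * Real.log (α i x / (α i x + β i x)) +
            β i x * Real.log (β i x / (α i x + β i x))) ∂μ =
          Pc * Real.log (1 / (c : ℝ)) +
            ((c : ℝ) - 1) * Pc * Real.log (((c : ℝ) - 1) / (c : ℝ))) ↔
        (∀ᵐ x ∂μ, α i x / Pc = β i x / (((c : ℝ) - 1) * Pc))) := by
  intro i
  set C : ℝ := (c : ℝ) with hCdef
  have hC : 2 ≤ C := by rw [hCdef]; exact_mod_cast hc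
  have hC0 : 0 < C := by linarith
  have hC1 : 0 < C - 1 := by linarith
  have hPc_pos : 0 < Pc := hPc ▸ hP_pos _
  have hPle : ∀ j : Fin c, P j ≤ Pc := by
    intro j
    rw [hPc]
    exact hP_mono j ⟨c - 1, by omega⟩ (by rw [Fin.le_def]; simp; omega)
  have hpd_i : ∀ j, Integrable (pd j) μ := by
    intro j
    by_contra h
    have := hpd_int j
    rw [integral_undef h] at this
    norm_num at this
  have hpg_i : ∀ j, Integrable (pg j) μ := by
    intro j
    by_contra h
    have := hpg_int j
    rw [integral_undef h] at this
    norm_num at this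
  have hα_int : ∀ j, Integrable (α j) μ := by
    intro j
    exact (((hpd_i j).const_mul (P j)).add ((hpg_i j).const_mul (Pc - P j))).congr
      (Filter.Eventually.of_forall fun x => (hα j x).symm)
  have hα_integral : ∀ j, ∫ x, α j x ∂μ = Pc := by
    intro j
    rw [integral_congr_ae (Filter.Eventually.of_forall (hα j)),
      integral_add ((hpd_i j).const_mul (P j)) ((hpg_i j).const_mul (Pc - P j)),
      integral_const_mul, integral_const_mul, hpd_int, hpg_int]
    ring
  have hβ_int : Integrable (β i) μ :=
    (integrable_finset_sum _ (fun j _ => hα_int j)).congr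
      (Filter.Eventually.of_forall fun x => (hβ i x).symm)
  have hβ_integral : ∫ x, β i x ∂μ = (C - 1) * Pc := by
    rw [integral_congr_ae (Filter.Eventually.of_forall (hβ i)),
      integral_finset_sum _ (fun j _ => hα_int j)]
    simp only [hα_integral, Finset.sum_const, nsmul_eq_mul]
    rw [Finset.card_erase_of_mem (Finset.mem_univ i), Finset.card_univ, Fintype.card_fin]
    rw [Nat.cast_sub (by omega)]
    norm_num
    exact Or.inl hCdef.symm
  have hα_nn : ∀ j x, 0 ≤ α j x := by
    intro j x
    rw [hα]
    have := hPle j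
    have := hP_pos j
    have := hpd_nonneg j x
    have := hpg_nonneg j x
    nlinarith
  have hβ_nn : ∀ x, 0 ≤ β i x := by
    intro x
    rw [hβ]
    exact Finset.sum_nonneg fun j _ => hα_nn j x
  set f : X → ℝ := fun x =>
    α i x * Real.log (α i x / (α i x + β i x)) +
      β i x * Real.log (β i x / (α i x + β i x)) with hfdef
  set g : X → ℝ := fun x =>
    α i x * Real.log (1 / C) + β i x * Real.log ((C - 1) / C) with hgdef
  have hg_int : Integrable g μ :=
    ((hα_int i).mul_const _).add (hβ_int.mul_const _)
  have hg_integral : ∫ x, g x ∂μ =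
      Pc * Real.log (1 / C) + (C - 1) * Pc * Real.log ((C - 1) / C) := by
    rw [hgdef]
    rw [integral_add ((hα_int i).mul_const _) (hβ_int.mul_const _),
      integral_mul_const, integral_mul_const, hα_integral, hβ_integral]
  have hpw := fun x => ptwise C (α i x) (β i x) hC (hα_nn i x) (hβ_nn x)
  have hle : ∫ x, g x ∂μ ≤ ∫ x, f x ∂μ :=
    integral_mono hg_int (hint i) (fun x => (hpw x).1)
  constructor
  · rw [← hg_integral]; exact hle
  · have hsub_int : Integrable (fun x => f x - g x) μ := (hint i).sub hg_int
    have hzero : (∫ x, (f x - g x) ∂μ = 0) ↔ ∀ᵐ x ∂μ, f x - g x = 0 := by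
      rw [integral_eq_zero_iff_of_nonneg (fun x => sub_nonneg.2 (hpw x).1) hsub_int]
      constructor
      · intro h; filter_upwards [h] with x hx; exact hx
      · intro h; filter_upwards [h] with x hx; exact hx
    have hiff_pt : ∀ x, (f x - g x = 0) ↔
        (α i x / Pc = β i x / ((C - 1) * Pc)) := by
      intro x
      rw [sub_eq_zero]
      rw [hfdef, hgdef]
      simp only []
      rw [(hpw x).2]
      rw [div_eq_div_iff hPc_pos.ne' (mul_pos hC1 hPc_pos).ne']
      constructor
      · intro h; rw [h]; ring
      · intro h
        have : (β i x - (C - 1) * α i x) * Pc = 0 := by ring_nf; ring_nf at h; linarith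
        have := mul_eq_zero.1 this
        rcases this with h' | h'
        · linarith
        · exact absurd h' hPc_pos.ne'
    rw [show (∫ x, f x ∂μ =
        Pc * Real.log (1 / C) + (C - 1) * Pc * Real.log ((C - 1) / C)) ↔
        (∫ x, (f x - g x) ∂μ = 0) by
      rw [integral_sub (hint i) hg_int, hg_integral, sub_eq_zero]]
    rw [hzero]
    exact ⟨fun h => by filter_upwards [h] with x hx; exact (hiff_pt x).1 hx,
      fun h => by filter_upwards [h] with x hx; exact (hiff_pt x).2 hx⟩
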